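/- The map Rot : Fin n × Fin (n−1) → Fin n × Fin (n−1) defined by Rot(v, i) = (v + i + 1, n − 2 − i) (vertex arithmetic mod n) is a consistent rotation map for the complete graph K_n: it is an involution onto adjacent vertices and every column of the associated matrix v ↦ v+i+1 is a bijection of vertices. -/

import Mathlib

/-!
Writing `i'` for the returned label `n - 2 - i`, i.e. `Fin.rev i`, the two shifts `i + 1` and
`i' + 1` add up to `n ≡ 0`, so `Rot` is an involution, hence a bijection. Since `0 < i + 1 < n`, the
shift is nonzero in `ZMod n`, which gives adjacency in `K_n`.
-/

namespace ZMod

theorem natCast_ne_zero_of_pos_of_lt {n a : ℕ} (ha : 0 < a) (han : a < n) : (a : ZMod n) ≠ 0 := by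
  rw [Ne, natCast_eq_zero_iff]
  exact fun hdvd => (Nat.le_of_dvd ha hdvd).not_gt han

end ZMod

def completeRot (n : ℕ) (p : ZMod n × Fin (n - 1)) : ZMod n × Fin (n - 1) :=
  (p.1 + (p.2.1 : ZMod n) + 1, ⟨n - 2 - p.2.1, by have := p.2.isLt; omega⟩)

namespace completeRot

variable {n : ℕ}

theorem snd_eq_rev (p : ZMod n × Fin (n - 1)) : (completeRot n p).2 = p.2.rev := by
  ext
  simp only [completeRot, Fin.val_rev]
  omega

theorem shift_add_shift_rev (i : Fin (n - 1)) :
    ((i : ℕ) : ZMod n) + 1 + ((i.rev : ℕ) : ZMod n) + 1 = 0 := by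
  have hsum : (i : ℕ) + 1 + (i.rev : ℕ) + 1 = n := by
    have := i.isLt
    rw [Fin.val_rev]
    omega
  have hcast : (((i : ℕ) + 1 + (i.rev : ℕ) + 1 : ℕ) : ZMod n) = 0 := by
    rw [hsum, ZMod.natCast_self]
  push_cast at hcast
  exact hcast

theorem involutive : Function.Involutive (completeRot n) := by
  rintro ⟨v, i⟩
  refine Prod.ext ?_ ?_
  · change v + (i : ZMod n) + 1 + ((completeRot n (v, i)).2 : ZMod n) + 1 = v
    rw [snd_eq_rev]
    linear_combination shift_add_shift_rev i
  · rw [snd_eq_rev, snd_eq_rev, Fin.rev_rev]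

theorem adj_fst (p : ZMod n × Fin (n - 1)) :
    (⊤ : SimpleGraph (ZMod n)).Adj p.1 (completeRot n p).1 := by
  have hshift : (((p.2 : ℕ) + 1 : ℕ) : ZMod n) ≠ 0 :=
    ZMod.natCast_ne_zero_of_pos_of_lt (Nat.succ_pos _) (by have := p.2.isLt; omega)
  intro h
  apply hshift
  simp only [completeRot] at h
  push_cast
  linear_combination -h

theorem injective_fst_column (i : Fin (n - 1)) :
    Function.Injective (fun v : ZMod n => (completeRot n (v, i)).1) :=
  fun v w h => by simpa only [completeRot, add_left_inj] using h

end completeRot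

/-- `Rot(v,i) = (v + i + 1, n - 2 - i)` is a consistent rotation map on the complete graph
`K_n` (`n ≥ 2`): an involution landing on adjacent (i.e. distinct) vertices, with each column
`v ↦ v + i + 1` a bijection, equivalently each vertex receives each label exactly once. -/
theorem complete_rotation_consistent (n : ℕ) (hn : 2 ≤ n) :
    letI Rot : ZMod n × Fin (n - 1) → ZMod n × Fin (n - 1) :=
      fun p => (p.1 + (p.2.1 : ZMod n) + 1,
        ⟨n - 2 - p.2.1, by have := p.2.isLt; omega⟩)
    (∀ p : ZMod n × Fin (n - 1), Rot (Rot p) = p) ∧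
      (∀ p : ZMod n × Fin (n - 1), (⊤ : SimpleGraph (ZMod n)).Adj p.1 (Rot p).1) ∧
      (∀ i : Fin (n - 1), Function.Injective (fun v : ZMod n => (Rot (v, i)).1)) ∧
      (∀ w : ZMod n, ∀ j : Fin (n - 1), ∃! p : ZMod n × Fin (n - 1), Rot p = (w, j)) :=
  ⟨completeRot.involutive, completeRot.adj_fst, completeRot.injective_fst_column,
    fun w j => completeRot.involutive.bijective.existsUnique (w, j)⟩
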